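/- arXiv:2003.10496 — 2 statements merged into one kernel-verified Lean document; each statement's English description precedes it below -/
import Mathlib

section
/- Let B : ℝ^n → ℝ be continuously differentiable and let x : ℝ → ℝ^n be a solution of ẋ = f(x) with f locally Lipschitz. Suppose there exists an extended class-K function α (continuous, strictly increasing, α(0)=0) such that ⟨∇B(x), f(x)⟩ + α(B(x)) ≥ 0 for all x. If B(x(0)) ≥ 0, then B(x(t)) ≥ 0 for all t ≥ 0 in the interval of existence of the solution. -/
/-!
Along the trajectory, `g t = B (x t)` has derivative `⟪∇B, f⟫ ≥ -α (g t)`, which is positive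
wherever `g t < 0`. So `g` is nondecreasing on any stretch where it is negative; after the last
time it is nonnegative it could therefore never drop below zero.
-/

open scoped RealInnerProductSpace

open Set

theorem HasGradientAt.comp_hasDerivAt {F : Type*} [NormedAddCommGroup F]
    [InnerProductSpace ℝ F] [CompleteSpace F] {B : F → ℝ} {b : F} {γ : ℝ → F} {v : F} {t : ℝ}
    (hB : HasGradientAt B b (γ t)) (hγ : HasDerivAt γ v t) :
    HasDerivAt (fun s => B (γ s)) ⟪b, v⟫ t := by
  have h := hB.hasFDerivAt.comp_hasDerivAt t hγ
  rwa [InnerProductSpace.toDual_apply_apply] at h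

theorem nonneg_of_hasDerivAt_nonneg_of_neg {g g' : ℝ → ℝ} {a : ℝ}
    (hg : ∀ t ≥ a, HasDerivAt g (g' t) t) (ha : 0 ≤ g a)
    (hg' : ∀ t ≥ a, g t < 0 → 0 ≤ g' t) :
    ∀ t ≥ a, 0 ≤ g t := by
  intro t ht
  by_contra! hgt
  have hcont : ContinuousOn g (Icc a t) := fun s hs => (hg s hs.1).continuousAt.continuousWithinAt
  -- the last time in `[a, t]` at which `g` is still nonnegative
  obtain ⟨τ, ⟨⟨hτa, hτt⟩, hgτ⟩, hτ_max⟩ : ∃ τ, IsGreatest (Icc a t ∩ g ⁻¹' Ici 0) τ :=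
    (isCompact_Icc.of_isClosed_subset
        (hcont.preimage_isClosed_of_isClosed isClosed_Icc isClosed_Ici) inter_subset_left
      ).exists_isGreatest ⟨a, ⟨le_rfl, ht⟩, ha⟩
  have hneg : ∀ s ∈ Ioc τ t, g s < 0 := fun s hs => by
    by_contra! hs'
    exact (hτ_max ⟨⟨hτa.trans hs.1.le, hs.2⟩, hs'⟩).not_gt hs.1
  have hmono : MonotoneOn g (Icc τ t) := by
    refine monotoneOn_of_hasDerivWithinAt_nonneg (f' := g') (convex_Icc τ t)
      (hcont.mono (Icc_subset_Icc_left hτa)) (fun s hs => ?_) (fun s hs => ?_) <;>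
      rw [interior_Icc] at hs
    · exact (hg s (hτa.trans hs.1.le)).hasDerivWithinAt
    · exact hg' s (hτa.trans hs.1.le) (hneg s ⟨hs.1, hs.2.le⟩)
  linarith [hmono ⟨le_rfl, hτt⟩ ⟨hτt, le_rfl⟩ hτt, show 0 ≤ g τ from hgτ]

theorem barrier_forward_invariance_general
    (n : ℕ) (f : EuclideanSpace ℝ (Fin n) → EuclideanSpace ℝ (Fin n))
    (B : EuclideanSpace ℝ (Fin n) → ℝ) (x : ℝ → EuclideanSpace ℝ (Fin n))
    (α : ℝ → ℝ)
    (hB : ContDiff ℝ 1 B)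
    (hsol : ∀ t ∈ Set.Ici (0 : ℝ), HasDerivAt x (f (x t)) t)
    (hα_mono : StrictMono α) (hα_zero : α 0 = 0)
    (hineq : ∀ y, ⟪gradient B y, f y⟫ + α (B y) ≥ 0)
    (h0 : B (x 0) ≥ 0) :
    ∀ t ≥ (0 : ℝ), B (x t) ≥ 0 := by
  refine nonneg_of_hasDerivAt_nonneg_of_neg (g' := fun t => ⟪gradient B (x t), f (x t)⟫)
    (fun t ht => ?_) h0 (fun t _ hneg => ?_)
  · exact ((hB.differentiable one_ne_zero) (x t)).hasGradientAt.comp_hasDerivAt (hsol t ht)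
  · have hα_neg : α (B (x t)) < 0 := hα_zero ▸ hα_mono hneg
    linarith [hineq (x t)]

/-- Barrier-certificate forward invariance: if B is C¹, f locally Lipschitz,
and ⟨∇B(x), f(x)⟩ + α(B(x)) ≥ 0 for an extended class-K function α,
then B(x(0)) ≥ 0 implies B(x(t)) ≥ 0 for all t ≥ 0. -/
theorem barrier_forward_invariance
    (n : ℕ) (f : EuclideanSpace ℝ (Fin n) → EuclideanSpace ℝ (Fin n))
    (B : EuclideanSpace ℝ (Fin n) → ℝ) (x : ℝ → EuclideanSpace ℝ (Fin n))
    (α : ℝ → ℝ)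
    (hB : ContDiff ℝ 1 B)
    (hf : LocallyLipschitz f)
    (hsol : ∀ t ∈ Set.Ici (0 : ℝ), HasDerivAt x (f (x t)) t)
    (hα_cont : Continuous α) (hα_mono : StrictMono α) (hα_zero : α 0 = 0)
    (hineq : ∀ y, ⟪gradient B y, f y⟫ + α (B y) ≥ 0)
    (h0 : B (x 0) ≥ 0) :
    ∀ t ≥ (0 : ℝ), B (x t) ≥ 0 :=
  barrier_forward_invariance_general n f B x α hB hsol hα_mono hα_zero hineq h0
end

section
/- Let B : ℝ^n → ℝ be C¹, g : ℝ^n → ℝ^{n×r} continuous, and f, h continuous with the dynamics ẋ = f(x) + g(x)u + h(x, y) where y ranges over a compact set D'. Suppose |g(x)ᵀ∇B(x)| > 0 for all x on the compact boundary set ∂D[c] = {x : B(x) = c}. Then there exists β ≥ 0 such that the feedback u(x) = β g(x)ᵀ∇B(x) satisfies ⟨∇B(x), f(x) + g(x)u(x) + h(x,y)⟩ ≥ 0 for all x ∈ ∂D[c] and all y ∈ D'. -/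
/-!
The feedback contributes β |gᵀ∇B|² to ⟪∇B, ẋ⟫. Since |gᵀ∇B|² is continuous and positive on the
compact set ∂D[c] × D', the ratio -⟪∇B, f + h⟫ / |gᵀ∇B|² is bounded above there, and any β ≥ 0
above that bound works.
-/

open scoped RealInnerProductSpace

theorem ContDiff.continuous_gradient {E : Type*} [NormedAddCommGroup E] [InnerProductSpace ℝ E]
    [CompleteSpace E] {B : E → ℝ} (hB : ContDiff ℝ 1 B) : Continuous (gradient B) :=
  (InnerProductSpace.toDual ℝ E).symm.continuous.comp (hB.continuous_fderiv one_ne_zero)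

theorem IsCompact.exists_nonneg_add_mul_nonneg {X : Type*} [TopologicalSpace X] {K : Set X}
    (hK : IsCompact K) {φ ψ : X → ℝ} (hφ : ContinuousOn φ K) (hψ : ContinuousOn ψ K)
    (hψ_pos : ∀ q ∈ K, 0 < ψ q) : ∃ β : ℝ, 0 ≤ β ∧ ∀ q ∈ K, 0 ≤ φ q + β * ψ q := by
  obtain ⟨M, hM⟩ := hK.bddAbove_image (hφ.neg.div hψ fun q hq => (hψ_pos q hq).ne')
  refine ⟨max M 0, le_max_right M 0, fun q hq => ?_⟩
  have hratio : -φ q / ψ q ≤ max M 0 := (hM ⟨q, hq, rfl⟩).trans (le_max_left M 0)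
  have := (div_le_iff₀ (hψ_pos q hq)).mp hratio
  linarith

theorem inner_sum_smul_inner_smul {E ι : Type*} [NormedAddCommGroup E] [InnerProductSpace ℝ E]
    [Fintype ι] (v : E) (g : ι → E) (β : ℝ) :
    ⟪v, ∑ j, (β * ⟪g j, v⟫) • g j⟫ = β * ∑ j, ⟪g j, v⟫ ^ 2 := by
  simp only [inner_sum, real_inner_smul_right, Finset.mul_sum]
  refine Finset.sum_congr rfl fun j _ => ?_
  rw [real_inner_comm (g j) v]
  ring

theorem sum_sq_pos_of_ne_zero {ι : Type*} [Fintype ι] {u : ι → ℝ} (hu : u ≠ 0) :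
    0 < ∑ j, u j ^ 2 := by
  obtain ⟨j, hj⟩ := Function.ne_iff.mp hu
  exact Finset.sum_pos' (fun i _ => sq_nonneg (u i)) ⟨j, Finset.mem_univ j, sq_pos_of_ne_zero hj⟩

/-- The `j`-th column of the input matrix `g x` is `g x j`, so `g(x) u = ∑ j, u j • g x j`. -/
theorem safe_feedback_exists
    (n r p : ℕ)
    (B : EuclideanSpace ℝ (Fin n) → ℝ)
    (f : EuclideanSpace ℝ (Fin n) → EuclideanSpace ℝ (Fin n))
    (g : EuclideanSpace ℝ (Fin n) → Fin r → EuclideanSpace ℝ (Fin n))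
    (h : EuclideanSpace ℝ (Fin n) → EuclideanSpace ℝ (Fin p) → EuclideanSpace ℝ (Fin n))
    (D' : Set (EuclideanSpace ℝ (Fin p))) (c : ℝ)
    (hB : ContDiff ℝ 1 B)
    (hf : Continuous f)
    (hg : Continuous g)
    (hh : Continuous fun q : EuclideanSpace ℝ (Fin n) × EuclideanSpace ℝ (Fin p) => h q.1 q.2)
    (hD' : IsCompact D')
    (hbdry_compact : IsCompact {x | B x = c})
    (hgB : ∀ x, B x = c → (fun j => ⟪g x j, gradient B x⟫) ≠ (0 : Fin r → ℝ)) :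
    ∃ β : ℝ, 0 ≤ β ∧ ∀ x, B x = c → ∀ y ∈ D',
      ⟪gradient B x,
        f x + (∑ j : Fin r, (β * ⟪g x j, gradient B x⟫) • g x j) + h x y⟫ ≥ 0 := by
  have hgrad := hB.continuous_gradient
  have hdrift : Continuous fun x => ∑ j, ⟪g x j, gradient B x⟫ ^ 2 :=
    continuous_finsetSum _ fun j _ => (((continuous_apply j).comp hg).inner hgrad).pow 2
  obtain ⟨β, hβ, hsafe⟩ := (hbdry_compact.prod hD').exists_nonneg_add_mul_nonneg
    (φ := fun q => ⟪gradient B q.1, f q.1 + h q.1 q.2⟫)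
    (ψ := fun q => ∑ j, ⟪g q.1 j, gradient B q.1⟫ ^ 2)
    ((hgrad.comp continuous_fst).inner ((hf.comp continuous_fst).add hh)).continuousOn
    (hdrift.comp continuous_fst).continuousOn
    fun q hq => sum_sq_pos_of_ne_zero (hgB q.1 hq.1)
  refine ⟨β, hβ, fun x hx y hy => ?_⟩
  rw [inner_add_right, inner_add_right, inner_sum_smul_inner_smul, ge_iff_le]
  have := hsafe (x, y) ⟨hx, hy⟩
  simp only [inner_add_right] at this
  linarith
end
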